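/- Let r be an odd integer at least 3 and let y ≥ 2 be an integer. Let a_0, …, a_{r−1} be the integers obtained by evaluating at y the polynomials a_{r−1} = b_{r−1}, a_0 = d_{r−1} − (z_{r−1} + y)·a_{r−1}, and a_{i+1} = d_{r−1} − f_i·a_i for 0 ≤ i ≤ r − 3. Then for every 0 ≤ m ≤ r − 1, the greatest common divisor of the r − 1 integers {a_j : 0 ≤ j ≤ r − 1, j ≠ m} is 1. -/

import Mathlib

open Polynomial

/-- The sequence `f` in `ℤ[y]`: `f 0 = y+1`, `f 1 = y²+1`,
`f i = f (i-1) * f (i-2) + (f (i-1) - 1) * (f (i-1) - 2)` for `i ≥ 2`. -/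
noncomputable def fP : ℕ → Polynomial ℤ
  | 0 => X + 1
  | 1 => X ^ 2 + 1
  | (i + 2) => fP (i + 1) * fP i + (fP (i + 1) - 1) * (fP (i + 1) - 2)

/-- The sequence `e` in `ℤ[y]`: `e i = y · f 0 ⋯ f (i-1)`. -/
noncomputable def eP (i : ℕ) : Polynomial ℤ := X * ∏ k ∈ Finset.range i, fP k

/-- The sequence `b` in `ℤ[y]`: `b 0 = 1` and `b i = (-1)^i + f (i-1) * b (i-1)` for `i ≥ 1`. -/
noncomputable def bP : ℕ → Polynomial ℤ
  | 0 => 1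
  | (i + 1) => (-1) ^ (i + 1) + fP i * bP i

/-- The sequence `z` in `ℤ[y]`: `z 0 = y - 1`, `z 1 = y² - y + 1`,
`z i = e (i-1) * z (i-1) + z (i-2)` for `i ≥ 2`. -/
noncomputable def zP : ℕ → Polynomial ℤ
  | 0 => X - 1
  | 1 => X ^ 2 - X + 1
  | (i + 2) => eP (i + 1) * zP (i + 1) + zP i

/-- The sequence `d` in `ℤ[y]`: `d i = e i + b i * (f i - 1)`. -/
noncomputable def dP (i : ℕ) : Polynomial ℤ := eP i + bP i * (fP i - 1)

lemma fP_add_two (n : ℕ) : fP (n+2) = fP (n + 1) * fP n + (fP (n + 1) - 1) * (fP (n + 1) - 2) := rfl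
lemma bP_succ (n : ℕ) : bP (n+1) = (-1) ^ (n + 1) + fP n * bP n := rfl
lemma zP_add_two (n : ℕ) : zP (n+2) = eP (n + 1) * zP (n + 1) + zP n := rfl

lemma eP_succ (n : ℕ) : eP (n+1) = eP n * fP n := by
  simp only [eP, Finset.prod_range_succ, mul_assoc]

lemma eP_eq (n : ℕ) : eP (n+1) = fP (n+1) + fP n - 2 := by
  induction n with
  | zero => simp only [eP, Finset.prod_range_one]; simp [fP]; ring
  | succ n ih =>
      rw [eP_succ, ih, fP_add_two]; ring

lemma key (n : ℕ) :
    bP n * (fP n - 1) - zP n * ∏ k ∈ Finset.range n, fP k = (-1) ^ n := by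
  induction n using Nat.twoStepInduction with
  | zero => simp [bP, fP, zP]
  | one => simp [bP, fP, zP, Finset.prod_range_one]; ring
  | more n ih1 ih2 =>
      rw [Finset.prod_range_succ, Finset.prod_range_succ] at *
      rw [zP_add_two, eP_eq, fP_add_two, bP_succ (n+1)]
      have hB := bP_succ n
      linear_combination ((fP (n+1) + fP n - 2) * fP (n+1)) * ih2 +
        (fP n * fP (n+1)) * ih1 + (fP (n+1) * (fP n - 1)) * hB

lemma dP_eq (n : ℕ) :
    dP n = (zP n + X) * ∏ k ∈ Finset.range n, fP k + (-1) ^ n := by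
  simp only [dP, eP]; linear_combination key n
lemma X_dvd_f (i : ℕ) : X ∣ fP i - 1 := by
  induction i using Nat.twoStepInduction with
  | zero => exact ⟨1, by simp [fP]⟩
  | one => exact ⟨X, by simp [fP]; ring⟩
  | more n ih1 ih2 =>
      obtain ⟨v, hv⟩ := ih1
      obtain ⟨u, hu⟩ := ih2
      refine ⟨u * fP n + v + u * (fP (n+1) - 2), ?_⟩
      rw [fP_add_two]
      linear_combination (fP n + fP (n+1) - 2) * hu + hv

lemma X_dvd_b (i : ℕ) : (Even i → X ∣ bP i - 1) ∧ (Odd i → X ∣ bP i) := by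
  induction i with
  | zero =>
      refine ⟨fun _ => by simp [bP], fun h => by simp [Nat.odd_iff] at h⟩
  | succ n ih =>
      rcases Nat.even_or_odd n with he | ho
      · refine ⟨fun h => absurd h (by simpa [Nat.even_add_one] using he), fun _ => ?_⟩
        obtain ⟨u, hu⟩ := ih.1 he
        obtain ⟨v, hv⟩ := X_dvd_f n
        have hpow : ((-1 : Polynomial ℤ)) ^ (n+1) = -1 := (he.add_one).neg_one_pow
        exact ⟨v * bP n + u, by rw [bP_succ]; linear_combination hpow + bP n * hv + hu⟩
      · refine ⟨fun _ => ?_, fun h => by rw [Nat.odd_iff] at h ho; omega⟩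
        obtain ⟨u, hu⟩ := ih.2 ho
        have hpow : ((-1 : Polynomial ℤ)) ^ (n+1) = 1 := (ho.add_one).neg_one_pow
        exact ⟨fP n * u, by rw [bP_succ]; linear_combination hpow + fP n * hu⟩

lemma f_succ_sub_two (j : ℕ) : fP j ∣ fP (j+1) - 2 := by
  cases j with
  | zero => exact ⟨X - 1, by simp [fP]; ring⟩
  | succ m =>
      refine ⟨fP m + fP (m+1) - 3, ?_⟩
      rw [fP_add_two]; ring

lemma f_dvd_f (j k : ℕ) : fP j ∣ fP (j + 1 + k) - (if Even k then 2 else 0) := by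
  induction k using Nat.twoStepInduction with
  | zero => simpa using f_succ_sub_two j
  | one =>
      obtain ⟨w, hw⟩ := f_succ_sub_two j
      refine ⟨fP (j+1) + (fP (j+1) - 1) * w, ?_⟩
      show fP (j+2) - _ = _
      rw [fP_add_two]
      simp only [Nat.not_even_one, if_false]
      linear_combination (fP (j+1) - 1) * hw
  | more n ih1 ih2 =>
      show fP j ∣ fP ((j + 1 + n) + 2) - _
      rw [fP_add_two]
      rw [show j + 1 + (n + 1) = j + 1 + n + 1 from rfl] at ih2
      rcases Nat.even_or_odd n with he | ho
      · rw [if_pos (by simpa [Nat.even_add] using he)]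
        rw [if_neg (by simpa [Nat.even_add_one] using he)] at ih2
        obtain ⟨v, hv⟩ := ih2
        refine ⟨v * (fP (j+1+n) + fP (j+1+n+1) - 3), ?_⟩
        linear_combination (fP (j+1+n) + fP (j+1+n+1) - 3) * hv
      · rw [if_neg (by simp [Nat.even_add, Nat.not_even_iff_odd.mpr ho])]
        rw [if_neg (Nat.not_even_iff_odd.mpr ho)] at ih1
        rw [if_pos (by simpa [Nat.even_add_one] using Nat.not_even_iff_odd.mpr ho)] at ih2
        obtain ⟨u, hu⟩ := ih1
        obtain ⟨v, hv⟩ := ih2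
        refine ⟨fP (j+1+n+1) * u + (fP (j+1+n+1) - 1) * v, ?_⟩
        linear_combination fP (j+1+n+1) * hu + (fP (j+1+n+1) - 1) * hv

lemma f_dvd_b (j k : ℕ) : fP j ∣ bP (j + 1 + k) - (-1) ^ (j+1) := by
  induction k with
  | zero => exact ⟨bP j, by rw [show j + 1 + 0 = j + 1 from rfl, bP_succ]; ring⟩
  | succ k ih =>
      show fP j ∣ bP ((j + 1 + k) + 1) - _
      rw [bP_succ]
      obtain ⟨u, hu⟩ := ih
      have hf := f_dvd_f j k
      rcases Nat.even_or_odd k with he | ho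
      · rw [if_pos he] at hf
        obtain ⟨w, hw⟩ := hf
        have hpow : ((-1 : Polynomial ℤ)) ^ (j + 1 + k + 1) = (-1) ^ j := by
          rw [show j + 1 + k + 1 = j + (k + 2) by omega, pow_add, (he.add even_two).neg_one_pow, mul_one]
        refine ⟨2 * u + w * (-1) ^ (j+1) + fP j * w * u, ?_⟩
        linear_combination hpow + bP (j+1+k) * hw + (2 + fP j * w) * hu
      · rw [if_neg (Nat.not_even_iff_odd.mpr ho)] at hf
        obtain ⟨w, hw⟩ := hf
        have hpow : ((-1 : Polynomial ℤ)) ^ (j + 1 + k + 1) = (-1) ^ (j + 1) := by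
          rw [show j + 1 + k + 1 = (j + 1) + (k + 1) by omega, pow_add, (ho.add_one).neg_one_pow, mul_one]
        refine ⟨w * bP (j+1+k), ?_⟩
        linear_combination hpow + bP (j+1+k) * hw
-- integer-level lemmas (appended to parts 1&2 context)
lemma b_y_case (y : ℤ) {N : ℕ} (hN : Even N) {p : ℕ} (hp : p.Prime)
    (hb : (p:ℤ) ∣ (bP N).eval y) (hy : (p:ℤ) ∣ y) : False := by
  have hp' : Prime (p:ℤ) := Nat.prime_iff_prime_int.mp hp
  obtain ⟨u, hu⟩ := (X_dvd_b N).1 hN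
  have h1 : (p:ℤ) ∣ (bP N).eval y - 1 := by
    refine hy.trans ⟨u.eval y, ?_⟩
    have := congrArg (eval y) hu
    simpa using this
  have h2 : (p:ℤ) ∣ 1 := by
    have := dvd_sub hb h1
    simpa using this
  exact hp'.not_unit (isUnit_of_dvd_one h2)

lemma no_common (y : ℤ) {N : ℕ} (hN : Even N) {p : ℕ} (hp : p.Prime)
    (hb : (p:ℤ) ∣ (bP N).eval y) (he : (p:ℤ) ∣ (eP N).eval y) : False := by
  have hp' : Prime (p:ℤ) := Nat.prime_iff_prime_int.mp hp
  have hE : (eP N).eval y = y * ∏ k ∈ Finset.range N, (fP k).eval y := by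
    simp [eP, eval_prod]
  rw [hE] at he
  rcases hp'.dvd_mul.mp he with hy | hprod
  · exact b_y_case y hN hp hb hy
  · obtain ⟨j, hj, hpj⟩ := (hp'.dvd_finset_prod_iff _).mp hprod
    rw [Finset.mem_range] at hj
    have hdvd := f_dvd_b j (N - 1 - j)
    rw [show j + 1 + (N - 1 - j) = N by omega] at hdvd
    have h2 : (p:ℤ) ∣ (bP N).eval y - (-1)^(j+1) := by
      refine hpj.trans ?_
      have := eval_dvd (x := y) hdvd
      simpa using this
    have h3 : (p:ℤ) ∣ ((-1:ℤ))^(j+1) := by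
      have := dvd_sub hb h2
      simpa using this
    exact hp'.not_unit (isUnit_of_dvd_unit h3 ((isUnit_one.neg).pow _))

lemma gcd_aux {a b : ℤ} (h : ∀ p : ℕ, p.Prime → (p:ℤ) ∣ a → (p:ℤ) ∣ b → False) :
    Int.gcd a b = 1 := by
  by_contra hne
  obtain ⟨p, hp, hpd⟩ := Nat.exists_prime_and_dvd hne
  exact h p hp ((Int.natCast_dvd_natCast.mpr hpd).trans (Int.gcd_dvd_left a b))
    ((Int.natCast_dvd_natCast.mpr hpd).trans (Int.gcd_dvd_right a b))

lemma e_of_d {y : ℤ} {N : ℕ} {p : ℕ} (hb : (p:ℤ) ∣ (bP N).eval y)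
    (hD : (p:ℤ) ∣ (dP N).eval y) : (p:ℤ) ∣ (eP N).eval y := by
  have heq : (eP N).eval y = (dP N).eval y - (bP N).eval y * ((fP N).eval y - 1) := by
    simp only [dP, eval_add, eval_mul, eval_sub, eval_one]; ring
  rw [heq]
  exact dvd_sub hD (hb.mul_right _)

lemma G1 (y : ℤ) {N : ℕ} (hN : Even N) :
    Int.gcd ((dP N).eval y - ((zP N).eval y + y) * (bP N).eval y) ((bP N).eval y) = 1 := by
  apply gcd_aux; intro p hp h0 hb
  have hD : (p:ℤ) ∣ (dP N).eval y := by
    have := dvd_add h0 (hb.mul_left ((zP N).eval y + y))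
    rwa [sub_add_cancel] at this
  exact no_common y hN hp hb (e_of_d hb hD)

lemma G2 (y : ℤ) {N : ℕ} (hN : Even N) :
    Int.gcd ((dP N).eval y - (y + 1) * ((dP N).eval y - ((zP N).eval y + y) * (bP N).eval y))
      ((bP N).eval y) = 1 := by
  apply gcd_aux; intro p hp h1 hb
  have hp' : Prime (p:ℤ) := Nat.prime_iff_prime_int.mp hp
  have hDy : (p:ℤ) ∣ (dP N).eval y * y := by
    have := dvd_sub (hb.mul_left ((y + 1) * ((zP N).eval y + y))) h1
    have e : (dP N).eval y * y = (y + 1) * ((zP N).eval y + y) * (bP N).eval y - ((dP N).eval y - (y + 1) * ((dP N).eval y - ((zP N).eval y + y) * (bP N).eval y)) := by ring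
    rw [e]; exact this
  rcases hp'.dvd_mul.mp hDy with hD | hy
  · exact no_common y hN hp hb (e_of_d hb hD)
  · exact b_y_case y hN hp hb hy

lemma G3 (y : ℤ) {N : ℕ} (hN : Even N) :
    Int.gcd ((dP N).eval y - ((zP N).eval y + y) * (bP N).eval y)
      ((dP N).eval y - (y + 1) * ((dP N).eval y - ((zP N).eval y + y) * (bP N).eval y)) = 1 := by
  apply gcd_aux; intro p hp h0 h1
  have hp' : Prime (p:ℤ) := Nat.prime_iff_prime_int.mp hp
  have hD : (p:ℤ) ∣ (dP N).eval y := by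
    have := dvd_add h1 (h0.mul_left (y + 1))
    rwa [sub_add_cancel] at this
  have hzb : (p:ℤ) ∣ ((zP N).eval y + y) * (bP N).eval y := by
    have := dvd_sub hD h0
    rwa [sub_sub_cancel] at this
  rcases hp'.dvd_mul.mp hzb with hz | hb
  · have hDeq : (dP N).eval y
        = ((zP N).eval y + y) * (∏ k ∈ Finset.range N, (fP k).eval y) + 1 := by
      have := congrArg (eval y) (dP_eq N)
      simpa [eval_prod, hN.neg_one_pow] using this
    have h1' : (p:ℤ) ∣ 1 := by
      have := dvd_sub hD (hz.mul_right (∏ k ∈ Finset.range N, (fP k).eval y))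
      rw [hDeq] at this
      simpa using this
    exact hp'.not_unit (isUnit_of_dvd_one h1')
  · exact no_common y hN hp hb (e_of_d hb hD)

lemma finset_gcd_one {S : Finset ℕ} {g : ℕ → ℤ} {j k : ℕ} (hj : j ∈ S) (hk : k ∈ S)
    (h : Int.gcd (g j) (g k) = 1) : S.gcd g = 1 := by
  have hd0 : S.gcd g ∣ ((Int.gcd (g j) (g k) : ℕ) : ℤ) :=
    Int.dvd_coe_gcd (Finset.gcd_dvd hj) (Finset.gcd_dvd hk)
  rw [h] at hd0
  have hd : S.gcd g ∣ (1:ℤ) := by simpa using hd0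
  calc S.gcd g = normalize (S.gcd g) := Finset.normalize_gcd.symm
    _ = 1 := normalize_eq_one.mpr (isUnit_of_dvd_one hd)

/-- The weight polynomials: `aAux r 0 = d (r-1) − (z (r-1) + y)·b (r-1)` and
`aAux r (i+1) = d (r-1) − f i · aAux r i`. -/
noncomputable def aAux (r : ℕ) : ℕ → Polynomial ℤ
  | 0 => dP (r - 1) - (zP (r - 1) + X) * bP (r - 1)
  | (i + 1) => dP (r - 1) - fP i * aAux r i

/-- The weight polynomials `a i` (for `0 ≤ i ≤ r-1`): `a (r-1) = b (r-1)`,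
`a 0 = d (r-1) − (z (r-1) + y)·a (r-1)`, and `a (i+1) = d (r-1) − f i · a i`
for `0 ≤ i ≤ r-3`. -/
noncomputable def aP (r i : ℕ) : Polynomial ℤ :=
  if i = r - 1 then bP (r - 1) else aAux r i

/-- Well-formedness: for `r` odd, `r ≥ 3`, and any integer `y ≥ 2`, any `r − 1` of the
`r` integers `a 0 (y), …, a (r-1) (y)` have greatest common divisor `1`. -/
theorem aP_wellformed (r : ℕ) (hodd : Odd r) (hr : 3 ≤ r) (y : ℤ) (hy : 2 ≤ y)
    (m : ℕ) (hm : m ≤ r - 1) :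
    Finset.gcd ((Finset.range r).erase m) (fun j => (aP r j).eval y) = 1 := by
  have hN : Even (r - 1) := Nat.Odd.sub_odd hodd odd_one
  have ha0 : (aP r 0).eval y
      = (dP (r-1)).eval y - ((zP (r-1)).eval y + y) * (bP (r-1)).eval y := by
    rw [aP, if_neg (by omega : ¬ (0 = r - 1))]
    simp only [aAux, eval_sub, eval_mul, eval_add, eval_X]
  have ha1 : (aP r 1).eval y
      = (dP (r-1)).eval y
        - (y + 1) * ((dP (r-1)).eval y - ((zP (r-1)).eval y + y) * (bP (r-1)).eval y) := by
    rw [aP, if_neg (by omega : ¬ (1 = r - 1))]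
    show (aAux r (0 + 1)).eval y = _
    rw [aAux]
    simp only [aAux, fP, eval_sub, eval_mul, eval_add, eval_X, eval_one]
  have har : (aP r (r-1)).eval y = (bP (r-1)).eval y := by rw [aP, if_pos rfl]
  rcases m with _ | _ | m
  · refine finset_gcd_one (j := 1) (k := r - 1) ?_ ?_ ?_
    · simp only [Finset.mem_erase, Finset.mem_range]; omega
    · simp only [Finset.mem_erase, Finset.mem_range]; omega
    · show Int.gcd ((aP r 1).eval y) ((aP r (r-1)).eval y) = 1
      rw [ha1, har]; exact G2 y hN
  · refine finset_gcd_one (j := 0) (k := r - 1) ?_ ?_ ?_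
    · simp only [Finset.mem_erase, Finset.mem_range]; omega
    · simp only [Finset.mem_erase, Finset.mem_range]; omega
    · show Int.gcd ((aP r 0).eval y) ((aP r (r-1)).eval y) = 1
      rw [ha0, har]; exact G1 y hN
  · refine finset_gcd_one (j := 0) (k := 1) ?_ ?_ ?_
    · simp only [Finset.mem_erase, Finset.mem_range]; omega
    · simp only [Finset.mem_erase, Finset.mem_range]; omega
    · show Int.gcd ((aP r 0).eval y) ((aP r 1).eval y) = 1
      rw [ha0, ha1]; exact G3 y hN
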